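/- Let g, h ∈ ℝ^m with g_j > 0 and h_j ≥ c > 0 for all j. Then the KL divergence between the product Poisson distributions satisfies KL(P_g ‖ P_h) ≤ (1/c)·‖g − h‖₂² ≤ (1/c)·‖g − h‖₁². -/

import Mathlib

/-!
Coordinatewise, `log t ≤ t - 1` at `t = x / y` turns the Poisson divergence term
`x log (x / y) - x + y` into at most the χ²-term `(x - y)² / y`, and `y ≥ c` bounds this by
`(x - y)² / c`. The ℓ₂–ℓ₁ comparison is `∑ aⱼ² ≤ (∑ aⱼ)²` for `aⱼ = |gⱼ - hⱼ| ≥ 0`.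
-/

open Finset

lemma mul_log_div_sub_add_le_sq_div {x y : ℝ} (hx : 0 ≤ x) (hy : 0 < y) :
    x * Real.log (x / y) - x + y ≤ (x - y) ^ 2 / y := by
  rcases hx.eq_or_lt with rfl | hx
  · simp [sq, hy.ne']
  have hlog : x * Real.log (x / y) ≤ x * (x / y - 1) :=
    mul_le_mul_of_nonneg_left (Real.log_le_sub_one_of_pos (by positivity)) hx.le
  have hchi : x * (x / y - 1) - x + y = (x - y) ^ 2 / y := by
    field_simp
    ring
  linarith

lemma sum_sq_le_sq_sum_abs {ι : Type*} (s : Finset ι) (f : ι → ℝ) :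
    ∑ i ∈ s, f i ^ 2 ≤ (∑ i ∈ s, |f i|) ^ 2 := by
  simpa only [sq_abs] using sum_sq_le_sq_sum_of_nonneg (s := s) fun i _ => abs_nonneg (f i)

theorem kl_product_poisson_le_l1_sq {m : ℕ} (g h : Fin m → ℝ) (c : ℝ) (hc : 0 < c)
    (hg : ∀ j, 0 < g j) (hh : ∀ j, c ≤ h j) :
    (∑ j, (g j * Real.log (g j / h j) - g j + h j))
        ≤ (1 / c) * ∑ j, (g j - h j) ^ 2 ∧
    (1 / c) * (∑ j, (g j - h j) ^ 2) ≤ (1 / c) * (∑ j, |g j - h j|) ^ 2 := by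
  constructor
  · rw [mul_sum]
    gcongr with j
    have hhj : 0 < h j := hc.trans_le (hh j)
    calc g j * Real.log (g j / h j) - g j + h j
        ≤ (g j - h j) ^ 2 / h j := mul_log_div_sub_add_le_sq_div (hg j).le hhj
      _ ≤ (g j - h j) ^ 2 / c := by gcongr; exact hh j
      _ = 1 / c * (g j - h j) ^ 2 := by ring
  · gcongr
    exact sum_sq_le_sq_sum_abs univ _
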